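/- arXiv:1808.05711 — 3 statements merged into one kernel-verified Lean document; each statement's English description precedes it below -/
import Mathlib

section
/- Define F : ℝ × ℝ → ℂ by F(x,t) = e^x·(tanh t + i·sech t). Then: (1) Im F(x,t) = e^x·sech t > 0, so F takes values in the upper half plane, and |F(x,t)| = e^x; (2) F is differentiable with partial derivatives ∂F/∂x (x,t) = F(x,t) and ∂F/∂t (x,t) = e^x·sech t·(sech t − i·tanh t); (3) for all real u, v one has |u·∂F/∂x(x,t) + v·∂F/∂t(x,t)|² = (Im F(x,t))²·(cosh²(t)·u² + v²); and consequently (4) (1/2)·(cosh(2t)·u² + v²) ≤ |u·∂F/∂x + v·∂F/∂t|² / (Im F(x,t))² ≤ cosh(2t)·u² + v², i.e. the pullback of the hyperbolic metric |dz|²/(Im z)² under F lies between half of and all of the ladder metric cosh(2t)dx² + dt², so F is pointwise √2-bi-Lipschitz between them. -/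
/-!
Write `F(x,t) = eˣ·w(t)` with `w(t) = tanh t + i·sech t`. Since `tanh² + sech² = 1`, `w(t)` is a
unit vector, so `|F| = eˣ`, and since `w' = sech t·(sech t − i·tanh t) = −i·sech t·w`, we get
`∂F/∂t = −i·sech t·F`. Hence `u·∂F/∂x + v·∂F/∂t = (u − i·v·sech t)·F` has squared modulus
`e²ˣ(u² + v² sech² t) = (Im F)²(cosh² t·u² + v²)`. Finally `cosh 2t = 2cosh² t − 1` lies between
`cosh² t` and `2cosh² t` because `cosh t ≥ 1`.
-/

open Real Complex

/-- The strip parametrization `F(x,t) = eˣ·(tanh t + i·sech t)` of the paper's ladders. -/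
noncomputable def stripMap (x t : ℝ) : ℂ :=
  (Real.exp x : ℂ) * ((Real.tanh t : ℂ) + ((Real.cosh t)⁻¹ : ℝ) * Complex.I)

/-- The `t`-partial derivative of the strip map:
`∂F/∂t = eˣ·sech t·(sech t − i·tanh t)`. -/
noncomputable def stripMapDt (x t : ℝ) : ℂ :=
  (Real.exp x : ℂ) * ((Real.cosh t)⁻¹ : ℝ) *
    (((Real.cosh t)⁻¹ : ℝ) - (Real.tanh t : ℝ) * Complex.I)

namespace Real

theorem tanh_sq_add_inv_cosh_sq (t : ℝ) : tanh t ^ 2 + (cosh t)⁻¹ ^ 2 = 1 := by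
  have hc : cosh t ≠ 0 := (cosh_pos t).ne'
  rw [tanh_eq_sinh_div_cosh]
  field_simp
  linear_combination -cosh_sq_sub_sinh_sq t

theorem hasDerivAt_tanh (t : ℝ) : HasDerivAt tanh ((cosh t)⁻¹ ^ 2) t := by
  have hc : cosh t ≠ 0 := (cosh_pos t).ne'
  have h := (hasDerivAt_sinh t).div (hasDerivAt_cosh t) hc
  rw [show tanh = fun s => sinh s / cosh s from funext tanh_eq_sinh_div_cosh]
  refine h.congr_deriv ?_
  field_simp
  linear_combination cosh_sq_sub_sinh_sq t

theorem hasDerivAt_inv_cosh (t : ℝ) :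
    HasDerivAt (fun s => (cosh s)⁻¹) (-((cosh t)⁻¹ * tanh t)) t := by
  refine ((hasDerivAt_cosh t).inv (cosh_pos t).ne').congr_deriv ?_
  rw [tanh_eq_sinh_div_cosh]
  ring

theorem cosh_sq_le_cosh_two_mul (t : ℝ) : cosh t ^ 2 ≤ cosh (2 * t) := by
  rw [cosh_two_mul]
  nlinarith [sq_nonneg (sinh t)]

theorem cosh_two_mul_le_two_mul_cosh_sq (t : ℝ) : cosh (2 * t) ≤ 2 * cosh t ^ 2 := by
  rw [cosh_two_mul, cosh_sq]
  linarith

end Real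

theorem stripMap_im (x t : ℝ) : (stripMap x t).im = Real.exp x * (Real.cosh t)⁻¹ := by
  simp only [stripMap, mul_im, add_re, add_im, ofReal_re, ofReal_im, I_re, I_im]
  ring

theorem stripMap_im_pos (x t : ℝ) : 0 < (stripMap x t).im := by
  rw [stripMap_im]
  positivity

theorem norm_stripMap (x t : ℝ) : ‖stripMap x t‖ = Real.exp x := by
  rw [stripMap, norm_mul, norm_add_mul_I, Real.tanh_sq_add_inv_cosh_sq, Real.sqrt_one, mul_one,
    Complex.norm_of_nonneg (Real.exp_pos x).le]

theorem stripMapDt_eq (x t : ℝ) :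
    stripMapDt x t = -(I * ((Real.cosh t)⁻¹ : ℝ)) * stripMap x t := by
  simp only [stripMapDt, stripMap]
  ring_nf
  simp only [I_sq]
  ring

theorem hasDerivAt_stripMap_fst (x t : ℝ) :
    HasDerivAt (fun y : ℝ => stripMap y t) (stripMap x t) x :=
  (Real.hasDerivAt_exp x).ofReal_comp.mul_const _

theorem hasDerivAt_stripMap_snd (x t : ℝ) :
    HasDerivAt (fun s : ℝ => stripMap x s) (stripMapDt x t) t := by
  have h := ((Real.hasDerivAt_tanh t).ofReal_comp.add
    ((Real.hasDerivAt_inv_cosh t).ofReal_comp.mul_const I)).const_mul (Real.exp x : ℂ)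
  refine h.congr_deriv ?_
  simp only [stripMapDt]
  push_cast
  ring

theorem norm_sq_stripMap_pullback (x t u v : ℝ) :
    ‖(u : ℂ) * stripMap x t + (v : ℂ) * stripMapDt x t‖ ^ 2 =
      (stripMap x t).im ^ 2 * (Real.cosh t ^ 2 * u ^ 2 + v ^ 2) := by
  have hc : Real.cosh t ≠ 0 := (Real.cosh_pos t).ne'
  have hfactor : (u : ℂ) * stripMap x t + (v : ℂ) * stripMapDt x t =
      ((u : ℂ) + (-(v * (Real.cosh t)⁻¹) : ℝ) * I) * stripMap x t := by
    rw [stripMapDt_eq]; push_cast; ring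
  rw [hfactor, norm_mul, mul_pow, norm_add_mul_I, sq_sqrt (by positivity), norm_stripMap,
    stripMap_im]
  field_simp

theorem ladder_metric_bounds (t u v : ℝ) :
    1 / 2 * (Real.cosh (2 * t) * u ^ 2 + v ^ 2) ≤ Real.cosh t ^ 2 * u ^ 2 + v ^ 2 ∧
      Real.cosh t ^ 2 * u ^ 2 + v ^ 2 ≤ Real.cosh (2 * t) * u ^ 2 + v ^ 2 := by
  have hu := sq_nonneg u
  constructor
  · nlinarith [Real.cosh_two_mul_le_two_mul_cosh_sq t, sq_nonneg v]
  · nlinarith [Real.cosh_sq_le_cosh_two_mul t]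

/-- `F(x,t) = eˣ·(tanh t + i·sech t)` takes values in the upper half plane with
`Im F = eˣ·sech t` and `|F| = eˣ`; its partial derivatives are `∂F/∂x = F` and
`∂F/∂t = eˣ·sech t·(sech t − i·tanh t)`; the pullback of the hyperbolic metric satisfies
`|u·∂F/∂x + v·∂F/∂t|² = (Im F)²·(cosh²t·u² + v²)`, so it lies between half of and all of
the ladder metric `cosh(2t)dx² + dt²`, i.e. `F` is pointwise `√2`-bi-Lipschitz. -/
theorem stripMap_properties (x t : ℝ) :
    ((stripMap x t).im = Real.exp x * (Real.cosh t)⁻¹ ∧ 0 < (stripMap x t).im ∧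
      ‖stripMap x t‖ = Real.exp x) ∧
    HasDerivAt (fun y : ℝ => stripMap y t) (stripMap x t) x ∧
    HasDerivAt (fun s : ℝ => stripMap x s) (stripMapDt x t) t ∧
    (∀ u v : ℝ,
      ‖(u : ℂ) * stripMap x t + (v : ℂ) * stripMapDt x t‖ ^ 2 =
        ((stripMap x t).im) ^ 2 * ((Real.cosh t) ^ 2 * u ^ 2 + v ^ 2)) ∧
    (∀ u v : ℝ,
      (1 / 2) * (Real.cosh (2 * t) * u ^ 2 + v ^ 2) ≤
        ‖(u : ℂ) * stripMap x t + (v : ℂ) * stripMapDt x t‖ ^ 2 /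
          ((stripMap x t).im) ^ 2 ∧
      ‖(u : ℂ) * stripMap x t + (v : ℂ) * stripMapDt x t‖ ^ 2 /
          ((stripMap x t).im) ^ 2 ≤
        Real.cosh (2 * t) * u ^ 2 + v ^ 2) := by
  have hpullback := norm_sq_stripMap_pullback x t
  have him_sq_ne : (stripMap x t).im ^ 2 ≠ 0 := (pow_pos (stripMap_im_pos x t) 2).ne'
  refine ⟨⟨stripMap_im x t, stripMap_im_pos x t, norm_stripMap x t⟩, hasDerivAt_stripMap_fst x t,
    hasDerivAt_stripMap_snd x t, hpullback, fun u v => ?_⟩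
  rw [hpullback, mul_div_cancel_left₀ _ him_sq_ne]
  exact ladder_metric_bounds t u v
end

section
/- There exists a constant N > 0 such that the following holds for every real ℓ ≥ 1. Let a, b ∈ 𝕌 with |a| = 1 and |b| = e^ℓ. Let γ : [0, dist(a,b)] → 𝕌 be any isometric embedding with γ(0) = a and γ(dist(a,b)) = b, let γ₁ : [0, dist(a,i)] → 𝕌 be any isometric embedding with endpoints a and i, and let γ₂ : [0, dist(i·e^ℓ, b)] → 𝕌 be any isometric embedding with endpoints i·e^ℓ and b. Then the Hausdorff distance (with respect to the hyperbolic metric) between the image of γ and the set im(γ₁) ∪ {i·y : 1 ≤ y ≤ e^ℓ} ∪ im(γ₂) is at most N. -/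
/-!
Since `sinh (d(z,w)/2) = |z - w| / (2 √(Im z Im w))`, Ptolemy's inequality in `ℂ` gives a
Ptolemy inequality for `sinh (d/2)`, and with `2 sinh t ≤ eᵗ ≤ 2 sinh t + 1` this is Gromov's
four-point condition for `ℍ` with `δ = log 4`. In such a space a point `p` of small detour
`d(a,p) + d(p,b) - d(a,b)` is close to the geodesic `[a,b]`; conversely, for any connected set
through `a` and `b`, the intermediate value theorem applied to `d(a,·) - d(·,b)` puts a point of
the set near each point of `[a,b]`. So it suffices that the broken path has bounded detour, which
follows from `cosh d(a, i eᵘ) = eᵘ / Im a` when `|a| = eᵘ` and from `|a - b| ≥ e^ℓ - 1`.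
-/

open Real Set Metric UpperHalfPlane

section GeodesicSegment

variable {X : Type*} [PseudoMetricSpace X]

structure IsGeodesicSegment (γ : ℝ → X) (x y : X) : Prop where
  dist_eq : ∀ s ∈ Icc 0 (dist x y), ∀ u ∈ Icc 0 (dist x y), dist (γ s) (γ u) = |s - u|
  apply_zero : γ 0 = x
  apply_dist : γ (dist x y) = y

namespace IsGeodesicSegment

variable {γ : ℝ → X} {x y : X}

theorem dist_left (h : IsGeodesicSegment γ x y) {t : ℝ} (ht : t ∈ Icc 0 (dist x y)) :
    dist x (γ t) = t := by
  have := h.dist_eq 0 ⟨le_rfl, dist_nonneg⟩ t ht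
  rwa [h.apply_zero, zero_sub, abs_neg, abs_of_nonneg ht.1] at this

theorem dist_right (h : IsGeodesicSegment γ x y) {t : ℝ} (ht : t ∈ Icc 0 (dist x y)) :
    dist (γ t) y = dist x y - t := by
  have := h.dist_eq t ht (dist x y) ⟨dist_nonneg, le_rfl⟩
  rwa [h.apply_dist, abs_of_nonpos (sub_nonpos.2 ht.2), neg_sub] at this

theorem dist_add_dist_eq (h : IsGeodesicSegment γ x y) {p : X} (hp : p ∈ γ '' Icc 0 (dist x y)) :
    dist x p + dist p y = dist x y := by
  obtain ⟨t, ht, rfl⟩ := hp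
  rw [h.dist_left ht, h.dist_right ht, add_sub_cancel]

theorem left_mem_image (h : IsGeodesicSegment γ x y) : x ∈ γ '' Icc 0 (dist x y) :=
  ⟨0, ⟨le_rfl, dist_nonneg⟩, h.apply_zero⟩

theorem right_mem_image (h : IsGeodesicSegment γ x y) : y ∈ γ '' Icc 0 (dist x y) :=
  ⟨dist x y, ⟨dist_nonneg, le_rfl⟩, h.apply_dist⟩

theorem isConnected_image (h : IsGeodesicSegment γ x y) : IsConnected (γ '' Icc 0 (dist x y)) :=
  (isConnected_Icc dist_nonneg).image γ <|
    (LipschitzOnWith.of_dist_le_mul (K := 1) fun s hs u hu => by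
      rw [h.dist_eq s hs u hu, NNReal.coe_one, one_mul, Real.dist_eq]).continuousOn

end IsGeodesicSegment

end GeodesicSegment

section GromovHyperbolic

/-- The four-point form of Gromov hyperbolicity: `(x|y)_w ≥ min (x|z)_w (y|z)_w - δ` for the
Gromov products based at any `w`. -/
def IsGromovHyperbolic (X : Type*) [PseudoMetricSpace X] (δ : ℝ) : Prop :=
  ∀ x y z w : X, dist x y + dist z w ≤ max (dist x z + dist y w) (dist x w + dist y z) + 2 * δ

variable {X : Type*} [PseudoMetricSpace X] {δ E : ℝ} {γ : ℝ → X} {a b : X}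

theorem IsGromovHyperbolic.exists_dist_le_of_dist_add_dist_le (hX : IsGromovHyperbolic X δ)
    (hγ : IsGeodesicSegment γ a b) {p : X} (hp : dist a p + dist p b ≤ dist a b + E) :
    ∃ t ∈ Icc 0 (dist a b), dist p (γ t) ≤ E / 2 + 2 * δ := by
  set t := (dist a b + dist a p - dist p b) / 2 with ht_def
  have ht : t ∈ Icc 0 (dist a b) :=
    ⟨by linarith [dist_triangle_left p b a], by linarith [dist_triangle_right a p b]⟩
  refine ⟨t, ht, ?_⟩
  have h := hX p (γ t) a b
  rw [dist_comm p a, dist_comm (γ t) a, hγ.dist_left ht, hγ.dist_right ht,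
    max_eq_left (by linarith)] at h
  linarith

theorem IsGromovHyperbolic.hausdorffDist_image_le (hX : IsGromovHyperbolic X δ)
    (hγ : IsGeodesicSegment γ a b) {P : Set X} (hP : IsPreconnected P) (ha : a ∈ P) (hb : b ∈ P)
    (hE : ∀ p ∈ P, dist a p + dist p b ≤ dist a b + E) :
    hausdorffDist (γ '' Icc 0 (dist a b)) P ≤ E + 4 * δ := by
  have near : ∀ p ∈ P, ∃ t ∈ Icc 0 (dist a b), dist p (γ t) ≤ E / 2 + 2 * δ :=
    fun p hp => hX.exists_dist_le_of_dist_add_dist_le hγ (hE p hp)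
  obtain ⟨t₀, -, ht₀⟩ := near a ha
  have hK : 0 ≤ E / 2 + 2 * δ := dist_nonneg.trans ht₀
  refine hausdorffDist_le_of_mem_dist (by linarith) ?_ ?_
  · rintro _ ⟨s, hs, rfl⟩
    -- `dist a · - dist · b` runs from `-dist a b` to `dist a b` along `P`
    obtain ⟨p, hp, hps⟩ : 2 * s - dist a b ∈ (fun p => dist a p - dist p b) '' P := by
      refine hP.intermediate_value ha hb (by fun_prop) ⟨?_, ?_⟩ <;>
        simp only [dist_self] <;> linarith [hs.1, hs.2]
    obtain ⟨t, ht, hpt⟩ := near p hp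
    have hst : |s - t| ≤ E / 2 + 2 * δ := by
      have := hγ.dist_left ht
      have := hγ.dist_right ht
      simp only at hps
      refine abs_le.2 ⟨?_, ?_⟩ <;>
        linarith [dist_triangle a p (γ t), dist_triangle a (γ t) p, dist_triangle p (γ t) b,
          dist_triangle (γ t) p b, dist_comm p (γ t)]
    refine ⟨p, hp, ?_⟩
    linarith [dist_triangle (γ s) (γ t) p, hγ.dist_eq s hs t ht, dist_comm p (γ t)]
  · intro p hp
    obtain ⟨t, ht, hpt⟩ := near p hp
    exact ⟨γ t, mem_image_of_mem γ ht, by linarith⟩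

theorem IsGromovHyperbolic.hausdorffDist_image_union_le (hX : IsGromovHyperbolic X δ)
    (hγ : IsGeodesicSegment γ a b) {x y : X} {γ₁ γ₂ γ₃ : ℝ → X} (h₁ : IsGeodesicSegment γ₁ a x)
    (h₂ : IsGeodesicSegment γ₂ x y) (h₃ : IsGeodesicSegment γ₃ y b)
    (hE : dist a x + dist x y + dist y b ≤ dist a b + E) :
    hausdorffDist (γ '' Icc 0 (dist a b))
      (γ₁ '' Icc 0 (dist a x) ∪ γ₂ '' Icc 0 (dist x y) ∪ γ₃ '' Icc 0 (dist y b)) ≤ E + 4 * δ := by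
  have hconn := (h₁.isConnected_image.union ⟨x, h₁.right_mem_image, h₂.left_mem_image⟩
    h₂.isConnected_image).union ⟨y, mem_union_right _ h₂.right_mem_image, h₃.left_mem_image⟩
    h₃.isConnected_image
  refine hX.hausdorffDist_image_le hγ hconn.isPreconnected (Or.inl (Or.inl h₁.left_mem_image))
    (Or.inr h₃.right_mem_image) fun p hp => ?_
  rcases hp with (hp | hp) | hp
  · linarith [h₁.dist_add_dist_eq hp, dist_triangle4 p x y b]
  · linarith [h₂.dist_add_dist_eq hp, dist_triangle a x p, dist_triangle p y b]
  · linarith [h₃.dist_add_dist_eq hp, dist_triangle4 a x y p]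

end GromovHyperbolic

theorem exp_le_two_mul_sinh_add_one {t : ℝ} (ht : 0 ≤ t) : exp t ≤ 2 * sinh t + 1 := by
  linarith [sinh_add_cosh t, cosh_sub_sinh t, exp_le_one_iff.2 (neg_nonpos.2 ht)]

theorem two_mul_sinh_le_exp (t : ℝ) : 2 * sinh t ≤ exp t := by
  rw [sinh_eq]
  linarith [exp_pos (-t)]

namespace UpperHalfPlane

theorem sinh_half_dist_mul_sinh_half_dist (x y z w : ℍ) :
    sinh (dist x y / 2) * sinh (dist z w / 2) * (4 * (√x.im * √y.im * √z.im * √w.im)) =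
      dist (x : ℂ) y * dist (z : ℂ) w := by
  rw [sinh_half_dist, sinh_half_dist, sqrt_mul x.im_pos.le, sqrt_mul z.im_pos.le]
  have := x.im_pos; have := y.im_pos; have := z.im_pos; have := w.im_pos
  field_simp
  ring

theorem sinh_half_dist_ptolemy (x y z w : ℍ) :
    sinh (dist x y / 2) * sinh (dist z w / 2) ≤
      sinh (dist x z / 2) * sinh (dist y w / 2) + sinh (dist x w / 2) * sinh (dist y z / 2) := by
  have hP : 0 < 4 * (√x.im * √y.im * √z.im * √w.im) := by
    have := x.im_pos; have := y.im_pos; have := z.im_pos; have := w.im_pos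
    positivity
  refine le_of_mul_le_mul_right ?_ hP
  have h := EuclideanGeometry.mul_dist_le_mul_dist_add_mul_dist (x : ℂ) z y w
  rw [dist_comm (z : ℂ) y] at h
  calc _ = dist (x : ℂ) y * dist (z : ℂ) w := sinh_half_dist_mul_sinh_half_dist x y z w
    _ ≤ dist (x : ℂ) z * dist (y : ℂ) w + dist (x : ℂ) w * dist (y : ℂ) z := by linarith
    _ = _ := by
      rw [← sinh_half_dist_mul_sinh_half_dist x z y w, ← sinh_half_dist_mul_sinh_half_dist x w y z]
      ring

theorem isGromovHyperbolic : IsGromovHyperbolic ℍ (log 4) := by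
  intro x y z w
  set R := max (dist x z + dist y w) (dist x w + dist y z)
  have hR₁ : dist x z + dist y w ≤ R := le_max_left _ _
  have hR₂ : dist x w + dist y z ≤ R := le_max_right _ _
  have hxy : dist x y ≤ R := by
    linarith [dist_triangle x z y, dist_triangle x w y, dist_comm z y, dist_comm w y]
  have hzw : dist z w ≤ R := by
    linarith [dist_triangle z x w, dist_triangle z y w, dist_comm z x, dist_comm z y]
  have hhalf : ∀ p q : ℍ, 0 ≤ dist p q / 2 := fun p q => div_nonneg dist_nonneg zero_le_two
  have hsinh : ∀ p q : ℍ, 0 ≤ 2 * sinh (dist p q / 2) := fun p q =>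
    mul_nonneg zero_le_two (sinh_nonneg_iff.2 (hhalf p q))
  have hprod : ∀ p q r t : ℍ, dist p q + dist r t ≤ R →
      2 * sinh (dist p q / 2) * (2 * sinh (dist r t / 2)) ≤ exp (R / 2) := fun p q r t h =>
    calc 2 * sinh (dist p q / 2) * (2 * sinh (dist r t / 2))
        ≤ exp (dist p q / 2) * exp (dist r t / 2) :=
          mul_le_mul (two_mul_sinh_le_exp _) (two_mul_sinh_le_exp _) (hsinh r t) (exp_pos _).le
      _ ≤ exp (R / 2) := by rw [← exp_add]; exact exp_le_exp.2 (by linarith)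
  -- with `s = sinh (d/2)`: `e^{d(x,y)/2} e^{d(z,w)/2} ≤ 4 s(x,y) s(z,w) + 2 s(x,y) + e^{d(z,w)/2}`,
  -- where Ptolemy bounds the first term by `2 e^{R/2}` and the other two are at most `e^{R/2}`
  have h₁ := exp_le_two_mul_sinh_add_one (hhalf x y)
  have h₂ := exp_le_two_mul_sinh_add_one (hhalf z w)
  have hE₁ : 2 * sinh (dist x y / 2) ≤ exp (R / 2) :=
    (two_mul_sinh_le_exp _).trans (exp_le_exp.2 (by linarith))
  have hE₂ : exp (dist z w / 2) ≤ exp (R / 2) := exp_le_exp.2 (by linarith)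
  have hpt := sinh_half_dist_ptolemy x y z w
  have key : exp ((dist x y + dist z w) / 2) ≤ exp (R / 2 + log 4) := by
    rw [add_div, exp_add, exp_add, exp_log four_pos]
    nlinarith [mul_le_mul_of_nonneg_right h₁ (exp_pos (dist z w / 2)).le,
      mul_le_mul_of_nonneg_left h₂ (hsinh x y), hprod x z y w hR₁, hprod x w y z hR₂,
      one_le_exp (div_nonneg ((add_nonneg dist_nonneg dist_nonneg).trans hR₁) zero_le_two)]
  linarith [exp_le_exp.1 key]

noncomputable def axisPoint (u : ℝ) : ℍ := mk ⟨0, exp u⟩ (exp_pos u)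

theorem coe_axisPoint (u : ℝ) : (axisPoint u : ℂ) = ⟨0, exp u⟩ := rfl

theorem im_axisPoint (u : ℝ) : (axisPoint u).im = exp u := rfl

theorem isometry_axisPoint : Isometry axisPoint := isometry_vertical_line 0

theorem dist_axisPoint (u v : ℝ) : dist (axisPoint u) (axisPoint v) = |u - v| := by
  rw [isometry_axisPoint.dist_eq, Real.dist_eq]

theorem image_axisPoint_Icc (u v : ℝ) :
    axisPoint '' Icc u v = {p : ℍ | (p : ℂ).re = 0 ∧ exp u ≤ (p : ℂ).im ∧ (p : ℂ).im ≤ exp v} := by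
  ext p
  constructor
  · rintro ⟨t, ⟨hut, htv⟩, rfl⟩
    exact ⟨rfl, exp_le_exp.2 hut, exp_le_exp.2 htv⟩
  · rintro ⟨hre, hu, hv⟩
    have him : 0 < (p : ℂ).im := p.im_pos
    refine ⟨log (p : ℂ).im, ⟨(le_log_iff_exp_le him).2 hu, (log_le_iff_le_exp him).2 hv⟩, ?_⟩
    exact UpperHalfPlane.ext (Complex.ext hre.symm (exp_log him))

theorem dist_axisPoint_zero {ℓ : ℝ} (hℓ : 0 ≤ ℓ) : dist (axisPoint 0) (axisPoint ℓ) = ℓ := by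
  rw [dist_axisPoint, zero_sub, abs_neg, abs_of_nonneg hℓ]

theorem isGeodesicSegment_axisPoint {ℓ : ℝ} (hℓ : 0 ≤ ℓ) :
    IsGeodesicSegment axisPoint (axisPoint 0) (axisPoint ℓ) where
  dist_eq s _ u _ := dist_axisPoint s u
  apply_zero := rfl
  apply_dist := by rw [dist_axisPoint_zero hℓ]

theorem mk_I_eq_axisPoint_zero : mk Complex.I (by simp) = axisPoint 0 := by
  refine UpperHalfPlane.ext (Complex.ext ?_ ?_) <;> simp [coe_axisPoint]

theorem mk_I_mul_exp_eq_axisPoint (ℓ : ℝ) (h : 0 < (Complex.I * (exp ℓ : ℂ)).im) :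
    mk (Complex.I * (exp ℓ : ℂ)) h = axisPoint ℓ := by
  refine UpperHalfPlane.ext (Complex.ext ?_ ?_) <;> simp [coe_axisPoint, -Complex.ofReal_exp]

theorem cosh_dist_axisPoint {a : ℍ} {u : ℝ} (ha : ‖(a : ℂ)‖ = exp u) :
    cosh (dist a (axisPoint u)) = exp u / a.im := by
  have hnorm : (a : ℂ).re ^ 2 + a.im ^ 2 = exp u ^ 2 := by
    rw [← ha, Complex.sq_norm, Complex.normSq_apply, coe_im]
    ring
  have hdist : dist (a : ℂ) (axisPoint u) ^ 2 = 2 * exp u * (exp u - a.im) := by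
    rw [Complex.dist_eq, Complex.sq_norm, Complex.normSq_apply]
    simp only [Complex.sub_re, Complex.sub_im, coe_axisPoint, coe_im]
    linear_combination hnorm
  have := a.im_pos
  rw [cosh_dist, hdist, im_axisPoint]
  field_simp
  ring

theorem exp_dist_axisPoint_mul_im_le {a : ℍ} {u : ℝ} (ha : ‖(a : ℂ)‖ = exp u) :
    exp (dist a (axisPoint u)) * a.im ≤ 2 * exp u := by
  have h := cosh_dist_axisPoint ha
  rw [eq_div_iff a.im_ne_zero] at h
  have := cosh_eq (dist a (axisPoint u))
  nlinarith [exp_pos (-dist a (axisPoint u)), a.im_pos]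

theorem sq_dist_coe_le (a b : ℍ) : dist (a : ℂ) b ^ 2 ≤ 2 * a.im * b.im * exp (dist a b) := by
  have h := cosh_dist a b
  have hab : 0 < 2 * a.im * b.im := by have := a.im_pos; have := b.im_pos; positivity
  have hcosh : cosh (dist a b) ≤ exp (dist a b) := by
    rw [cosh_eq]
    linarith [exp_le_exp.2 (neg_le_self (dist_nonneg (x := a) (y := b)))]
  rw [← div_le_iff₀' hab]
  linarith

theorem dist_add_dist_add_dist_axisPoint_le {a b : ℍ} {u v : ℝ} (huv : log 2 + u ≤ v)
    (ha : ‖(a : ℂ)‖ = exp u) (hb : ‖(b : ℂ)‖ = exp v) :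
    dist a (axisPoint u) + dist (axisPoint u) (axisPoint v) + dist (axisPoint v) b ≤
      dist a b + log 32 := by
  rw [dist_axisPoint, abs_sub_comm, abs_of_nonneg (by linarith [log_pos one_lt_two])]
  have hA := exp_dist_axisPoint_mul_im_le ha
  have hB := exp_dist_axisPoint_mul_im_le hb
  rw [dist_comm] at hB
  have h2v : 2 * exp u ≤ exp v := by
    simpa [exp_add, exp_log two_pos] using exp_le_exp.2 huv
  have hab : exp v / 2 ≤ dist (a : ℂ) b := by
    have := norm_sub_norm_le (b : ℂ) a
    rw [ha, hb] at this
    rw [dist_comm, Complex.dist_eq]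
    linarith
  have := a.im_pos
  have := b.im_pos
  rw [← exp_le_exp, exp_add, exp_add, exp_add, exp_log (by norm_num), exp_sub]
  refine le_of_mul_le_mul_right ?_ (mul_pos a.im_pos b.im_pos)
  calc exp (dist a (axisPoint u)) * (exp v / exp u) * exp (dist (axisPoint v) b) * (a.im * b.im)
      = exp (dist a (axisPoint u)) * a.im * (exp (dist (axisPoint v) b) * b.im) * exp v / exp u := by
        ring
    _ ≤ 2 * exp u * (2 * exp v) * exp v / exp u := by gcongr
    _ = 16 * (exp v / 2) ^ 2 := by field_simp; ring
    _ ≤ 16 * dist (a : ℂ) b ^ 2 := by gcongr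
    _ ≤ 16 * (2 * a.im * b.im * exp (dist a b)) := by gcongr; exact sq_dist_coe_le a b
    _ = exp (dist a b) * 32 * (a.im * b.im) := by ring

end UpperHalfPlane

/-- There is a universal constant `N` such that for every `ℓ ≥ 1`, points `a, b` of the
upper half plane with `|a| = 1` and `|b| = e^ℓ`, the geodesic `[a,b]` lies within Hausdorff
distance `N` (for the hyperbolic metric) of the broken path `[a,i] ∪ 𝒪 ∪ [i·e^ℓ, b]`,
where `𝒪 = {i·y : 1 ≤ y ≤ e^ℓ}` is the common perpendicular of the strip of width `ℓ`. -/
theorem broken_path_hausdorff_close :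
    ∃ N : ℝ, 0 < N ∧ ∀ ℓ : ℝ, 1 ≤ ℓ →
      ∀ a b : UpperHalfPlane,
        ‖(a : ℂ)‖ = 1 → ‖(b : ℂ)‖ = Real.exp ℓ →
      ∀ γ γ₁ γ₂ : ℝ → UpperHalfPlane,
        (∀ s ∈ Set.Icc (0 : ℝ) (dist a b), ∀ u ∈ Set.Icc (0 : ℝ) (dist a b),
          dist (γ s) (γ u) = |s - u|) →
        γ 0 = a → γ (dist a b) = b →
        (∀ s ∈ Set.Icc (0 : ℝ) (dist a (UpperHalfPlane.mk Complex.I (by simp))),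
          ∀ u ∈ Set.Icc (0 : ℝ) (dist a (UpperHalfPlane.mk Complex.I (by simp))),
          dist (γ₁ s) (γ₁ u) = |s - u|) →
        γ₁ 0 = a →
        γ₁ (dist a (UpperHalfPlane.mk Complex.I (by simp))) =
          UpperHalfPlane.mk Complex.I (by simp) →
        (∀ s ∈ Set.Icc (0 : ℝ)
            (dist (UpperHalfPlane.mk (Complex.I * (Real.exp ℓ : ℂ))
              (by rw [Complex.mul_im, Complex.I_re, Complex.I_im, Complex.ofReal_re, Complex.ofReal_im]; simpa using Real.exp_pos ℓ)) b),
          ∀ u ∈ Set.Icc (0 : ℝ)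
            (dist (UpperHalfPlane.mk (Complex.I * (Real.exp ℓ : ℂ))
              (by rw [Complex.mul_im, Complex.I_re, Complex.I_im, Complex.ofReal_re, Complex.ofReal_im]; simpa using Real.exp_pos ℓ)) b),
          dist (γ₂ s) (γ₂ u) = |s - u|) →
        γ₂ 0 = UpperHalfPlane.mk (Complex.I * (Real.exp ℓ : ℂ))
          (by rw [Complex.mul_im, Complex.I_re, Complex.I_im, Complex.ofReal_re, Complex.ofReal_im]; simpa using Real.exp_pos ℓ) →
        γ₂ (dist (UpperHalfPlane.mk (Complex.I * (Real.exp ℓ : ℂ))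
            (by rw [Complex.mul_im, Complex.I_re, Complex.I_im, Complex.ofReal_re, Complex.ofReal_im]; simpa using Real.exp_pos ℓ)) b) = b →
        Metric.hausdorffDist (γ '' Set.Icc (0 : ℝ) (dist a b))
          ((γ₁ '' Set.Icc (0 : ℝ)
              (dist a (UpperHalfPlane.mk Complex.I (by simp)))) ∪
            {p : UpperHalfPlane | (p : ℂ).re = 0 ∧ 1 ≤ (p : ℂ).im ∧
              (p : ℂ).im ≤ Real.exp ℓ} ∪
            (γ₂ '' Set.Icc (0 : ℝ)
              (dist (UpperHalfPlane.mk (Complex.I * (Real.exp ℓ : ℂ))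
                (by rw [Complex.mul_im, Complex.I_re, Complex.I_im, Complex.ofReal_re, Complex.ofReal_im]; simpa using Real.exp_pos ℓ)) b))) ≤ N := by
  refine ⟨log 32 + 4 * log 4, by positivity, ?_⟩
  intro ℓ hℓ a b ha hb γ γ₁ γ₂ hγ hγ0 hγd hγ₁ hγ₁0 hγ₁d hγ₂ hγ₂0 hγ₂d
  simp only [mk_I_eq_axisPoint_zero, mk_I_mul_exp_eq_axisPoint] at hγ₁ hγ₁d hγ₂ hγ₂0 hγ₂d ⊢
  have hℓ₀ : 0 ≤ ℓ := by linarith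
  have hO : {p : ℍ | (p : ℂ).re = 0 ∧ 1 ≤ (p : ℂ).im ∧ (p : ℂ).im ≤ exp ℓ} =
      axisPoint '' Icc 0 (dist (axisPoint 0) (axisPoint ℓ)) := by
    rw [dist_axisPoint_zero hℓ₀, image_axisPoint_Icc, exp_zero]
  rw [hO]
  exact isGromovHyperbolic.hausdorffDist_image_union_le ⟨hγ, hγ0, hγd⟩ ⟨hγ₁, hγ₁0, hγ₁d⟩
    (isGeodesicSegment_axisPoint hℓ₀) ⟨hγ₂, hγ₂0, hγ₂d⟩
    (dist_add_dist_add_dist_axisPoint_le (by linarith [log_two_lt_d9]) (by rwa [exp_zero]) hb)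
end

section
/- For a continuously differentiable path γ = (γ₁, γ₂, γ₃) : [0,1] → ℝ³, define its Sol-length as L(γ) = ∫₀¹ √(e^{2γ₃(s)}·γ₁′(s)² + e^{−2γ₃(s)}·γ₂′(s)² + γ₃′(s)²) ds. Suppose γ(0) = (x, y, t) and γ(1) = (x′, y′, t) have equal third coordinate t, and that L(γ) ≤ D for some D ≥ 0. Then √(e^{2t}·(x − x′)² + e^{−2t}·(y − y′)²) ≤ D·e^{D/2}. -/
open Real Set MeasureTheory

/-!
The height `γ₃` moves no faster than the Sol speed and returns to its initial value `t`, so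
it stays within `D / 2` of `t`. Where `|γ₃ - t| ≤ D / 2`, the weights `e^{±2t}` of the level
surface at height `t` exceed the weights `e^{±2γ₃}` of the Sol metric by a factor at most
`e^D`, so the horizontal velocity has flat length at most `e^{D/2}` times the Sol speed.
Integrating, the horizontal projection of the path has flat length at most `e^{D/2} D`, which
bounds the flat distance between its endpoints.
-/

/-- The length of the tangent vector `(p, q, r)` at height `τ` in the Sol metric
`e^{2τ}dx² + e^{−2τ}dy² + dτ²`. -/
noncomputable def solNorm (τ p q r : ℝ) : ℝ :=
  √(exp (2 * τ) * p ^ 2 + exp (-(2 * τ)) * q ^ 2 + r ^ 2)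

/-- The length of the vector `(p, q)` in the flat metric `e^{2t}dx² + e^{−2t}dy²` of the level
surface at height `t`. -/
noncomputable def levelNorm (t p q : ℝ) : ℝ :=
  √(exp (2 * t) * p ^ 2 + exp (-(2 * t)) * q ^ 2)

section Continuity

variable {X : Type*} [TopologicalSpace X] {S : Set X} {τ p q r : X → ℝ}

lemma ContinuousOn.solNorm (hτ : ContinuousOn τ S) (hp : ContinuousOn p S)
    (hq : ContinuousOn q S) (hr : ContinuousOn r S) :
    ContinuousOn (fun x => solNorm (τ x) (p x) (q x) (r x)) S := by
  unfold _root_.solNorm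
  fun_prop

lemma ContinuousOn.levelNorm (hτ : ContinuousOn τ S) (hp : ContinuousOn p S)
    (hq : ContinuousOn q S) : ContinuousOn (fun x => levelNorm (τ x) (p x) (q x)) S := by
  unfold _root_.levelNorm
  fun_prop

end Continuity

lemma abs_le_solNorm (τ p q r : ℝ) : |r| ≤ solNorm τ p q r := by
  rw [← sqrt_sq_eq_abs, solNorm]
  gcongr
  have := exp_pos (2 * τ)
  have := exp_pos (-(2 * τ))
  nlinarith [sq_nonneg p, sq_nonneg q]

lemma levelNorm_le_exp_mul_solNorm {t τ c : ℝ} (h : |τ - t| ≤ c) (p q r : ℝ) :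
    levelNorm t p q ≤ exp c * solNorm τ p q r := by
  obtain ⟨hlo, hhi⟩ := abs_le.1 h
  have hsq : exp c ^ 2 = exp (2 * c) := by rw [sq, ← exp_add, two_mul]
  have hx : exp (2 * t) ≤ exp c ^ 2 * exp (2 * τ) := by
    rw [hsq, ← exp_add]; gcongr; linarith
  have hy : exp (-(2 * t)) ≤ exp c ^ 2 * exp (-(2 * τ)) := by
    rw [hsq, ← exp_add]; gcongr; linarith
  rw [levelNorm, solNorm, ← sqrt_sq (exp_pos c).le, ← sqrt_mul (sq_nonneg _)]
  gcongr
  nlinarith [mul_le_mul_of_nonneg_right hx (sq_nonneg p),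
    mul_le_mul_of_nonneg_right hy (sq_nonneg q), sq_nonneg r, sq_nonneg (exp c)]

lemma levelNorm_sub_comm (t x y x' y' : ℝ) :
    levelNorm t (x - x') (y - y') = levelNorm t (x' - x) (y' - y) := by
  simp only [levelNorm, ← neg_sub x, ← neg_sub y, neg_sq]

lemma levelNorm_eq_sqrt (t p q : ℝ) :
    levelNorm t p q = √((exp t * p) ^ 2 + (exp (-t) * q) ^ 2) := by
  simp only [levelNorm, mul_pow, sq (exp _), ← exp_add, ← two_mul, mul_neg]

lemma sqrt_integral_sq_add_integral_sq_le {f g : ℝ → ℝ} {a b : ℝ} (hab : a ≤ b)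
    (hf : IntervalIntegrable f volume a b) (hg : IntervalIntegrable g volume a b) :
    √((∫ x in a..b, f x) ^ 2 + (∫ x in a..b, g x) ^ 2) ≤
      ∫ x in a..b, √(f x ^ 2 + g x ^ 2) := by
  have hnorm (u v : ℝ) : ‖(u + v * Complex.I : ℂ)‖ = √(u ^ 2 + v ^ 2) := by
    simp [Complex.norm_eq_sqrt_sq_add_sq]
  have hint : ∫ x in a..b, ((f x : ℂ) + g x * Complex.I) =
      (∫ x in a..b, f x : ℝ) + (∫ x in a..b, g x : ℝ) * Complex.I := by
    have hf' : IntervalIntegrable (fun x => (f x : ℂ)) volume a b :=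
      ⟨hf.1.ofReal, hf.2.ofReal⟩
    have hg' : IntervalIntegrable (fun x => (g x : ℂ)) volume a b :=
      ⟨hg.1.ofReal, hg.2.ofReal⟩
    rw [intervalIntegral.integral_add hf' (hg'.mul_const _), intervalIntegral.integral_mul_const,
      intervalIntegral.integral_ofReal, intervalIntegral.integral_ofReal]
  simpa only [hint, hnorm] using
    intervalIntegral.norm_integral_le_integral_norm (μ := volume) hab
    (f := fun x => (f x : ℂ) + g x * Complex.I)

section Path

variable {f : ℝ → ℝ} {a b : ℝ}

lemma integral_derivWithin_eq_sub_of_le {u v : ℝ} (hf : ContDiffOn ℝ 1 f (Icc a b))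
    (hau : a ≤ u) (huv : u ≤ v) (hvb : v ≤ b) :
    ∫ x in u..v, derivWithin f (Icc a b) x = f v - f u := by
  rw [← intervalIntegral.integral_deriv_of_contDiffOn_Icc (hf.mono (Icc_subset_Icc hau hvb)) huv,
    intervalIntegral.integral_of_le huv, intervalIntegral.integral_of_le huv,
    ← restrict_Ioo_eq_restrict_Ioc]
  refine integral_congr_ae ?_
  filter_upwards [self_mem_ae_restrict measurableSet_Ioo] with x hx
  exact derivWithin_of_mem_nhds (Icc_mem_nhds (hau.trans_lt hx.1) (hx.2.trans_le hvb))

lemma ContDiffOn.intervalIntegrable_derivWithin (hf : ContDiffOn ℝ 1 f (Icc a b))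
    (hab : a < b) :
    IntervalIntegrable (derivWithin f (Icc a b)) volume a b :=
  (hf.continuousOn_derivWithin (uniqueDiffOn_Icc hab) le_rfl).intervalIntegrable_of_Icc hab.le

lemma two_mul_abs_sub_le_integral_abs_derivWithin {s : ℝ} (hab : a < b)
    (hf : ContDiffOn ℝ 1 f (Icc a b)) (hfab : f a = f b) (hs : s ∈ Icc a b) :
    2 * |f s - f a| ≤ ∫ x in a..b, |derivWithin f (Icc a b) x| := by
  have hint := (hf.intervalIntegrable_derivWithin hab).abs
  rw [← intervalIntegral.integral_add_adjacent_intervals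
    (hint.mono_set (uIcc_subset_uIcc_left (Icc_subset_uIcc hs)))
    (hint.mono_set (uIcc_subset_uIcc_right (Icc_subset_uIcc hs)))]
  calc 2 * |f s - f a|
      = |∫ x in a..s, derivWithin f (Icc a b) x| +
          |∫ x in s..b, derivWithin f (Icc a b) x| := by
        rw [integral_derivWithin_eq_sub_of_le hf le_rfl hs.1 hs.2,
          integral_derivWithin_eq_sub_of_le hf hs.1 hs.2 le_rfl, hfab, abs_sub_comm (f b)]
        ring
    _ ≤ _ := add_le_add (intervalIntegral.abs_integral_le_integral_abs hs.1)
      (intervalIntegral.abs_integral_le_integral_abs hs.2)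

lemma two_mul_abs_sub_le_integral_solNorm {τ p q : ℝ → ℝ} {s : ℝ} (hab : a < b)
    (hf : ContDiffOn ℝ 1 f (Icc a b)) (hfab : f a = f b)
    (hsol : IntervalIntegrable (fun x => solNorm (τ x) (p x) (q x) (derivWithin f (Icc a b) x))
      volume a b) (hs : s ∈ Icc a b) :
    2 * |f s - f a| ≤ ∫ x in a..b, solNorm (τ x) (p x) (q x) (derivWithin f (Icc a b) x) :=
  (two_mul_abs_sub_le_integral_abs_derivWithin hab hf hfab hs).trans <|
    intervalIntegral.integral_mono_on hab.le (hf.intervalIntegrable_derivWithin hab).abs hsol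
      fun _ _ => abs_le_solNorm _ _ _ _

lemma levelNorm_sub_le_integral {g : ℝ → ℝ} (t : ℝ) (hab : a < b)
    (hf : ContDiffOn ℝ 1 f (Icc a b)) (hg : ContDiffOn ℝ 1 g (Icc a b)) :
    levelNorm t (f b - f a) (g b - g a) ≤
      ∫ x in a..b, levelNorm t (derivWithin f (Icc a b) x) (derivWithin g (Icc a b) x) := by
  simp only [levelNorm_eq_sqrt]
  rw [← integral_derivWithin_eq_sub_of_le hf le_rfl hab.le le_rfl,
    ← integral_derivWithin_eq_sub_of_le hg le_rfl hab.le le_rfl,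
    ← intervalIntegral.integral_const_mul, ← intervalIntegral.integral_const_mul]
  exact sqrt_integral_sq_add_integral_sq_le hab.le
    ((hf.intervalIntegrable_derivWithin hab).const_mul _)
    ((hg.intervalIntegrable_derivWithin hab).const_mul _)

end Path

theorem sol_level_surface_uniformly_proper_general
    (γ₁ γ₂ γ₃ : ℝ → ℝ)
    (h₁ : ContDiffOn ℝ 1 γ₁ (Icc 0 1)) (h₂ : ContDiffOn ℝ 1 γ₂ (Icc 0 1))
    (h₃ : ContDiffOn ℝ 1 γ₃ (Icc 0 1))
    (x y t x' y' : ℝ)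
    (h0 : γ₁ 0 = x ∧ γ₂ 0 = y ∧ γ₃ 0 = t)
    (h1 : γ₁ 1 = x' ∧ γ₂ 1 = y' ∧ γ₃ 1 = t)
    (D : ℝ)
    (hlen : (∫ s in (0 : ℝ)..1,
        Real.sqrt (Real.exp (2 * γ₃ s) * (derivWithin γ₁ (Icc 0 1) s) ^ 2 +
          Real.exp (-(2 * γ₃ s)) * (derivWithin γ₂ (Icc 0 1) s) ^ 2 +
          (derivWithin γ₃ (Icc 0 1) s) ^ 2)) ≤ D) :
    Real.sqrt (Real.exp (2 * t) * (x - x') ^ 2 + Real.exp (-(2 * t)) * (y - y') ^ 2) ≤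
      D * Real.exp (D / 2) := by
  obtain ⟨rfl, rfl, rfl⟩ := h0
  obtain ⟨rfl, rfl, hγ₃⟩ := h1
  set v₁ := derivWithin γ₁ (Icc (0 : ℝ) 1)
  set v₂ := derivWithin γ₂ (Icc (0 : ℝ) 1)
  set v₃ := derivWithin γ₃ (Icc (0 : ℝ) 1)
  change ∫ s in (0 : ℝ)..1, solNorm (γ₃ s) (v₁ s) (v₂ s) (v₃ s) ≤ D at hlen
  change levelNorm (γ₃ 0) (γ₁ 0 - γ₁ 1) (γ₂ 0 - γ₂ 1) ≤ _
  have hv₁ := h₁.continuousOn_derivWithin (uniqueDiffOn_Icc one_pos) le_rfl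
  have hv₂ := h₂.continuousOn_derivWithin (uniqueDiffOn_Icc one_pos) le_rfl
  have hv₃ := h₃.continuousOn_derivWithin (uniqueDiffOn_Icc one_pos) le_rfl
  have hsol :
      IntervalIntegrable (fun s => solNorm (γ₃ s) (v₁ s) (v₂ s) (v₃ s)) volume 0 1 :=
    (h₃.continuousOn.solNorm hv₁ hv₂ hv₃).intervalIntegrable_of_Icc zero_le_one
  have hlevel : IntervalIntegrable (fun s => levelNorm (γ₃ 0) (v₁ s) (v₂ s)) volume 0 1 :=
    (continuousOn_const.levelNorm hv₁ hv₂).intervalIntegrable_of_Icc zero_le_one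
  have hheight (s : ℝ) (hs : s ∈ Icc (0 : ℝ) 1) : |γ₃ s - γ₃ 0| ≤ D / 2 := by
    linarith [two_mul_abs_sub_le_integral_solNorm one_pos h₃ hγ₃.symm hsol hs]
  calc levelNorm (γ₃ 0) (γ₁ 0 - γ₁ 1) (γ₂ 0 - γ₂ 1)
      = levelNorm (γ₃ 0) (γ₁ 1 - γ₁ 0) (γ₂ 1 - γ₂ 0) := levelNorm_sub_comm ..
    _ ≤ ∫ s in (0 : ℝ)..1, levelNorm (γ₃ 0) (v₁ s) (v₂ s) :=
      levelNorm_sub_le_integral _ one_pos h₁ h₂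
    _ ≤ ∫ s in (0 : ℝ)..1, exp (D / 2) * solNorm (γ₃ s) (v₁ s) (v₂ s) (v₃ s) :=
      intervalIntegral.integral_mono_on zero_le_one hlevel (hsol.const_mul _)
        fun s hs => levelNorm_le_exp_mul_solNorm (hheight s hs) _ _ _
    _ ≤ D * exp (D / 2) := by
      rw [intervalIntegral.integral_const_mul, mul_comm]
      gcongr

/-- Uniform properness of level surfaces in the Sol model metric
`ds² = e^{2t}dx² + e^{−2t}dy² + dt²`: if a C¹ path joins two points `(x,y,t)` and
`(x′,y′,t)` on the same level surface and has Sol-length at most `D`, then the flat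
level-surface distance `√(e^{2t}(x−x′)² + e^{−2t}(y−y′)²)` is at most `D·e^{D/2}`. -/
theorem sol_level_surface_uniformly_proper
    (γ₁ γ₂ γ₃ : ℝ → ℝ)
    (h₁ : ContDiffOn ℝ 1 γ₁ (Icc 0 1)) (h₂ : ContDiffOn ℝ 1 γ₂ (Icc 0 1))
    (h₃ : ContDiffOn ℝ 1 γ₃ (Icc 0 1))
    (x y t x' y' : ℝ)
    (h0 : γ₁ 0 = x ∧ γ₂ 0 = y ∧ γ₃ 0 = t)
    (h1 : γ₁ 1 = x' ∧ γ₂ 1 = y' ∧ γ₃ 1 = t)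
    (D : ℝ) (hD : 0 ≤ D)
    (hlen : (∫ s in (0 : ℝ)..1,
        Real.sqrt (Real.exp (2 * γ₃ s) * (derivWithin γ₁ (Icc 0 1) s) ^ 2 +
          Real.exp (-(2 * γ₃ s)) * (derivWithin γ₂ (Icc 0 1) s) ^ 2 +
          (derivWithin γ₃ (Icc 0 1) s) ^ 2)) ≤ D) :
    Real.sqrt (Real.exp (2 * t) * (x - x') ^ 2 + Real.exp (-(2 * t)) * (y - y') ^ 2) ≤
      D * Real.exp (D / 2) :=
  sol_level_surface_uniformly_proper_general γ₁ γ₂ γ₃ h₁ h₂ h₃ x y t x' y' h0 h1 D hlen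
end
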